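/- arXiv:0912.3188 — 3 statements merged into one kernel-verified Lean document; each statement's English description precedes it below -/
import Mathlib

section
/- Let (V,d) be a finite metric space, ω : V → ℝ≥0, and M ≥ 0. For r ∈ V define T(r) = {v ∈ V : v ≠ r ∧ ω(r)·d(v,r) ≤ M} and S(r) = {v ∈ V : v ≠ r ∧ ω(r)·d(v,r) ≤ 2M}. Let r₁,…,r_k be a sequence of distinct points such that ω(r₁) ≥ ω(r₂) ≥ … ≥ ω(r_k), and let idx ⊆ {1,…,k} be a set of indices such that for all i, j ∈ idx with i < j, r_i ∉ S(r_j) and r_j ∉ S(r_i). Then the sets {T(r_i)}_{i ∈ idx} are pairwise disjoint. -/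
theorem mul_dist_le_add_of_mul_dist_le {V : Type*} [PseudoMetricSpace V] {a b v : V}
    {wa wb Ma Mb : ℝ} (hwb : 0 ≤ wb) (hw : wb ≤ wa)
    (ha : wa * dist v a ≤ Ma) (hb : wb * dist v b ≤ Mb) :
    wb * dist a b ≤ Ma + Mb :=
  calc wb * dist a b ≤ wb * (dist v a + dist v b) :=
        mul_le_mul_of_nonneg_left (dist_triangle_left a b v) hwb
    _ = wb * dist v a + wb * dist v b := mul_add _ _ _
    _ ≤ wa * dist v a + wb * dist v b := by gcongr
    _ ≤ Ma + Mb := add_le_add ha hb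

theorem stmt_1_general {V : Type*} [MetricSpace V]
    (ω : V → ℝ) (hω : ∀ v, 0 ≤ ω v) (M : ℝ)
    (T S : V → Set V)
    (hT : ∀ r, T r = {v : V | v ≠ r ∧ ω r * dist v r ≤ M})
    (hS : ∀ r, S r = {v : V | v ≠ r ∧ ω r * dist v r ≤ 2 * M})
    (k : ℕ) (r : Fin k → V) (hinj : Function.Injective r)
    (hmono : ∀ i j : Fin k, i ≤ j → ω (r j) ≤ ω (r i))
    (idx : Finset (Fin k))
    (hsep : ∀ i ∈ idx, ∀ j ∈ idx, i < j → r i ∉ S (r j) ∧ r j ∉ S (r i)) :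
    ∀ i ∈ idx, ∀ j ∈ idx, i ≠ j → Disjoint (T (r i)) (T (r j)) := by
  have disjoint_of_lt : ∀ i ∈ idx, ∀ j ∈ idx, i < j → Disjoint (T (r i)) (T (r j)) := by
    intro i hi j hj hij
    rw [hT, hT, Set.disjoint_left]
    rintro v ⟨-, hvi⟩ ⟨-, hvj⟩
    have hri : r i ∈ S (r j) := by
      rw [hS]
      refine ⟨hinj.ne hij.ne, ?_⟩
      rw [two_mul]
      exact mul_dist_le_add_of_mul_dist_le (hω _) (hmono i j hij.le) hvi hvj
    exact (hsep i hi j hj hij).1 hri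
  intro i hi j hj hij
  rcases hij.lt_or_gt with h | h
  · exact disjoint_of_lt i hi j hj h
  · exact (disjoint_of_lt j hj i hi h).symm

/-- the feasible-backup sets of selected servers are pairwise disjoint. -/
theorem stmt_1 {V : Type*} [MetricSpace V] [Fintype V]
    (ω : V → ℝ) (hω : ∀ v, 0 ≤ ω v) (M : ℝ) (hM : 0 ≤ M)
    (T S : V → Set V)
    (hT : ∀ r, T r = {v : V | v ≠ r ∧ ω r * dist v r ≤ M})
    (hS : ∀ r, S r = {v : V | v ≠ r ∧ ω r * dist v r ≤ 2 * M})
    (k : ℕ) (r : Fin k → V) (hinj : Function.Injective r)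
    (hmono : ∀ i j : Fin k, i ≤ j → ω (r j) ≤ ω (r i))
    (idx : Finset (Fin k))
    (hsep : ∀ i ∈ idx, ∀ j ∈ idx, i < j → r i ∉ S (r j) ∧ r j ∉ S (r i)) :
    ∀ i ∈ idx, ∀ j ∈ idx, i ≠ j → Disjoint (T (r i)) (T (r j)) :=
  stmt_1_general ω hω M T S hT hS k r hinj hmono idx hsep
end

section
/- Let (V,d) be a finite metric space with demands ω : V → ℝ≥0, opening costs f : V → ℝ≥0, and n = |V|. For R ⊆ V nonempty define C_ship(R) = ∑_{v ∈ V} ω(v)·d(v,R) with d(v,R) = min_{r∈R} d(v,r), C_facil(R) = ∑_{r∈R} f(r), C_UFL(R) = C_facil(R) + C_ship(R), and for R with |R| ≥ 2 define C_RFTFL(R) = C_facil(R) + max_{r ∈ R} C_ship(R∖{r}). Let R₁ ⊆ V be nonempty, and assign each v ∈ V to a nearest server σ(v) ∈ R₁ (so d(v,σ(v)) = d(v,R₁)). Define ω'(r) = ∑_{v : σ(v)=r} ω(v) for r ∈ R₁. Then for the optimal RFTFL solution R* (with |R₁ ∪ R*| ≥ 2 and R₁ ∪ R* ∖ {r} nonempty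 for all r ∈ R₁): max_{r ∈ R₁} ω'(r)·d(r, (R₁∪R*)∖{r}) ≤ C_ship(R₁) + max_{r ∈ R₁} ∑_{v∈V} ω(v)·d(v, (R₁∪R*)∖{r}). -/
/-!
Moving the demand of a client `v` to its server `r = σ v` costs at most a detour through `v`:
`d(r, S) ≤ d(r, v) + d(v, S)` with `d(r, v) = d(v, R₁)`. Summing over the clients served by `r`
bounds `ω'(r) · d(r, S)` by the shipping cost to `R₁` plus the shipping cost to `S`, for every
`S`, in particular for `S = (R₁ ∪ R*) ∖ {r}`.
-/

/-- Distance from a point to a finite set (0 if the set is empty). -/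
noncomputable def ddist {V : Type*} [MetricSpace V] (x : V) (S : Finset V) : ℝ :=
  if h : S.Nonempty then S.inf' h (fun s => dist x s) else 0

noncomputable def CRFTFL {V : Type*} [MetricSpace V] [Fintype V] [DecidableEq V]
    (f ω : V → ℝ) (R : Finset V) : ℝ :=
  (∑ r ∈ R, f r) +
    if h : R.Nonempty then
      R.sup' h (fun r => ∑ v : V, ω v * ddist v (R.erase r))
    else 0

open Finset

section ddist

variable {V : Type*} [MetricSpace V]

theorem ddist_nonneg (x : V) (S : Finset V) : 0 ≤ ddist x S := by
  unfold ddist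
  split_ifs with h
  · exact le_inf' h _ fun _ _ => dist_nonneg
  · exact le_rfl

theorem ddist_le_dist_add_ddist (x y : V) (S : Finset V) : ddist x S ≤ dist x y + ddist y S := by
  unfold ddist
  split_ifs with h
  · obtain ⟨s, hs, hys⟩ := S.exists_mem_eq_inf' h (dist y ·)
    rw [hys]
    exact (inf'_le _ hs).trans (dist_triangle x y s)
  · simp

end ddist

theorem sum_fiber_mul_ddist_le {V : Type*} [MetricSpace V] [Fintype V] [DecidableEq V]
    (ω : V → ℝ) (hω : ∀ v, 0 ≤ ω v) (σ : V → V) (r : V) (S : Finset V) :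
    (∑ v ∈ univ.filter (fun v => σ v = r), ω v) * ddist r S ≤
      ∑ v, ω v * dist v (σ v) + ∑ v, ω v * ddist v S := by
  calc (∑ v ∈ univ.filter (fun v => σ v = r), ω v) * ddist r S
      = ∑ v ∈ univ.filter (fun v => σ v = r), ω v * ddist (σ v) S := by
        rw [sum_mul]
        refine sum_congr rfl fun v hv => ?_
        rw [(mem_filter.mp hv).2]
    _ ≤ ∑ v ∈ univ.filter (fun v => σ v = r), ω v * (dist v (σ v) + ddist v S) := by
        gcongr with v
        · exact hω v
        · rw [dist_comm]
          exact ddist_le_dist_add_ddist _ _ _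
    _ ≤ ∑ v, ω v * (dist v (σ v) + ddist v S) :=
        sum_le_sum_of_subset_of_nonneg (subset_univ _) fun v _ _ =>
          mul_nonneg (hω v) (add_nonneg dist_nonneg (ddist_nonneg v S))
    _ = ∑ v, ω v * dist v (σ v) + ∑ v, ω v * ddist v S := by
        simp only [mul_add, sum_add_distrib]

theorem stmt_7_general {V : Type*} [MetricSpace V] [Fintype V] [DecidableEq V]
    (ω : V → ℝ) (hω : ∀ v, 0 ≤ ω v)
    (R₁ : Finset V) (h₁ : R₁.Nonempty)
    (σ : V → V) (hσ : ∀ v, σ v ∈ R₁ ∧ dist v (σ v) = ddist v R₁)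
    (ω' : V → ℝ) (hω' : ∀ r, ω' r = ∑ v ∈ Finset.univ.filter (fun v => σ v = r), ω v)
    (Rstar : Finset V) :
    R₁.sup' h₁ (fun r => ω' r * ddist r ((R₁ ∪ Rstar).erase r)) ≤
      (∑ v : V, ω v * ddist v R₁) +
      R₁.sup' h₁ (fun r => ∑ v : V, ω v * ddist v ((R₁ ∪ Rstar).erase r)) := by
  refine sup'_le _ _ fun r hr => ?_
  have hship : ∑ v, ω v * dist v (σ v) = ∑ v, ω v * ddist v R₁ := by
    simp only [(hσ _).2]
  calc ω' r * ddist r ((R₁ ∪ Rstar).erase r)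
      ≤ ∑ v, ω v * ddist v R₁ + ∑ v, ω v * ddist v ((R₁ ∪ Rstar).erase r) := by
        rw [hω', ← hship]
        exact sum_fiber_mul_ddist_le ω hω σ r _
    _ ≤ _ := by
        gcongr
        exact le_sup' (fun r => ∑ v, ω v * ddist v ((R₁ ∪ Rstar).erase r)) hr

/-- backup-cost bound of Lemma 3.6. -/
theorem stmt_7 {V : Type*} [MetricSpace V] [Fintype V] [DecidableEq V]
    (ω f : V → ℝ) (hω : ∀ v, 0 ≤ ω v) (hf : ∀ v, 0 ≤ f v)
    (R₁ : Finset V) (h₁ : R₁.Nonempty)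
    (σ : V → V) (hσ : ∀ v, σ v ∈ R₁ ∧ dist v (σ v) = ddist v R₁)
    (ω' : V → ℝ) (hω' : ∀ r, ω' r = ∑ v ∈ Finset.univ.filter (fun v => σ v = r), ω v)
    (Rstar : Finset V)
    (hopt : ∀ R' : Finset V, 2 ≤ R'.card → CRFTFL f ω Rstar ≤ CRFTFL f ω R')
    (hcard : 2 ≤ (R₁ ∪ Rstar).card)
    (hne : ∀ r ∈ R₁, ((R₁ ∪ Rstar).erase r).Nonempty) :
    R₁.sup' h₁ (fun r => ω' r * ddist r ((R₁ ∪ Rstar).erase r)) ≤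
      (∑ v : V, ω v * ddist v R₁) +
      R₁.sup' h₁ (fun r => ∑ v : V, ω v * ddist v ((R₁ ∪ Rstar).erase r)) :=
  stmt_7_general ω hω R₁ h₁ σ hσ ω' hω' Rstar
end

section
/- Let (V,d) be a finite metric space with ω : V → ℝ≥0, and let R₁ ⊆ V, R* ⊆ V with R₁ ∪ R* having at least α+1 elements. Define M₀ = max_{F ⊆ V, |F| ≤ α} ∑_{r ∈ F ∩ R₁} ω(r)·d(r, (R₁∪R*)∖F). Then for every r ∈ R₁, |{v ∈ (R₁∪R*)∖{r} : ω(r)·d(r,v) ≤ M₀}| ≥ α. -/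
/-! If fewer than `α` nodes of `R₁ ∪ R*` other than `r` lie within weighted distance `M₀` of `r`,
failing `r` together with all of them is a failure set of size at most `α` whose rerouting cost,
already from the term of `r`, exceeds `M₀`. -/

open Finset

section Rerouting

variable {V : Type*} [MetricSpace V]

theorem lt_mul_ddist {x : V} {S : Finset V} {w c : ℝ} (hS : S.Nonempty)
    (h : ∀ v ∈ S, c < w * dist x v) : c < w * ddist x S := by
  obtain ⟨v, hv, hmin⟩ := exists_mem_eq_inf' hS (dist x)
  rw [ddist, dif_pos hS, hmin]
  exact h v hv

variable [DecidableEq V]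

noncomputable def reroutingCost (ω : V → ℝ) (R₁ U F : Finset V) : ℝ :=
  ∑ x ∈ F ∩ R₁, ω x * ddist x (U \ F)

variable {ω : V → ℝ}

theorem mul_ddist_le_reroutingCost (hω : ∀ v, 0 ≤ ω v) {R₁ U F : Finset V} {r : V}
    (hr : r ∈ F ∩ R₁) : ω r * ddist r (U \ F) ≤ reroutingCost ω R₁ U F :=
  single_le_sum (f := fun x => ω x * ddist x (U \ F))
    (fun x _ => mul_nonneg (hω x) (ddist_nonneg x _)) hr

theorem le_card_near_of_reroutingCost_le (hω : ∀ v, 0 ≤ ω v) {α : ℕ} {R₁ U : Finset V}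
    (hcard : α + 1 ≤ U.card) {M : ℝ}
    (hM : ∀ F : Finset V, F.card ≤ α → reroutingCost ω R₁ U F ≤ M) {r : V} (hr : r ∈ R₁) :
    α ≤ ((U.erase r).filter fun v => ω r * dist r v ≤ M).card := by
  by_contra! hlt
  set B := (U.erase r).filter fun v => ω r * dist r v ≤ M
  set F := insert r B
  have hF : F.card ≤ α := (card_insert_le r B).trans (by omega)
  have hsurvivors : (U \ F).Nonempty := by
    have := le_card_sdiff F U
    rw [← card_pos]
    omega
  have hfar : ∀ v ∈ U \ F, M < ω r * dist r v := by
    intro v hv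
    simp only [F, B, mem_sdiff, mem_insert, mem_filter, mem_erase, not_or] at hv
    by_contra! hle
    exact hv.2.2 ⟨⟨hv.2.1, hv.1⟩, hle⟩
  have hterm := mul_ddist_le_reroutingCost hω (U := U) (mem_inter.2 ⟨mem_insert_self r B, hr⟩)
  linarith [lt_mul_ddist hsurvivors hfar, hM F hF]

end Rerouting

/-- feasibility claim inside Lemma 4.5: every server in R₁ has at least
α backups within weighted distance M₀. -/
theorem stmt_14 {V : Type*} [MetricSpace V] [Fintype V] [DecidableEq V]
    (ω : V → ℝ) (hω : ∀ v, 0 ≤ ω v)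
    (α : ℕ)
    (R₁ Rstar : Finset V) (hcard : α + 1 ≤ (R₁ ∪ Rstar).card)
    (M₀ : ℝ)
    (hM₀ : M₀ = ((Finset.univ : Finset V).powerset.filter (fun F => F.card ≤ α)).sup'
      ⟨∅, by simp⟩ (fun F => ∑ r ∈ F ∩ R₁, ω r * ddist r ((R₁ ∪ Rstar) \ F))) :
    ∀ r ∈ R₁,
      α ≤ (((R₁ ∪ Rstar).erase r).filter (fun v => ω r * dist r v ≤ M₀)).card := by
  refine fun r hr => le_card_near_of_reroutingCost_le hω hcard (fun F hF => ?_) hr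
  rw [hM₀]
  exact le_sup' (fun F => reroutingCost ω R₁ (R₁ ∪ Rstar) F) (by simp [hF])
end
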